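/- Let x : ℝ → ℝ³ be C³ with |x'(t)| ≤ v₀ < 1 for all t and with x'' supported in [−T, T], so that x'(t) = v_in for t ≤ −T and x'(t) = v_out for t ≥ T for some constant vectors v_in, v_out. Define K(p) = (1/i) ∫_ℝ [ (ψ_tt(p,t)/ψ_t(p,t)²) x'(t) − (1/ψ_t(p,t)) x''(t) ] e^{iψ(p,t)} dt and F(p) = v_out/(|p| − p·v_out) − v_in/(|p| − p·v_in), both for p ≠ 0. Then there is a constant C such that |K(p) − i F(p)| ≤ C for all p with 0 < |p| ≤ 1. -/

import Mathlib

open MeasureTheory Complex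

noncomputable section

abbrev E3 := EuclideanSpace ℝ (Fin 3)
abbrev C3 := EuclideanSpace ℂ (Fin 3)

/-- The inclusion `ℝ³ → ℂ³`. -/
def cmap (v : E3) : C3 := WithLp.toLp 2 (fun i => (v i : ℂ))

/-- The phase `ψ(p,t) = |p| t − p·x(t)`. -/
def psi (x : ℝ → E3) (p : E3) (t : ℝ) : ℝ := ‖p‖ * t - (inner ℝ p (x t) : ℝ)

/-- `ψ_t(p,t) = |p| − p·x'(t)`. -/
def psit (x : ℝ → E3) (p : E3) (t : ℝ) : ℝ := ‖p‖ - (inner ℝ p (deriv x t) : ℝ)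

/-- `ψ_tt(p,t) = −p·x''(t)`. -/
def psitt (x : ℝ → E3) (p : E3) (t : ℝ) : ℝ := -(inner ℝ p (deriv (deriv x) t) : ℝ)

/-- `K(p) = (1/i) ∫ [ (ψ_tt/ψ_t²) x'(t) − (1/ψ_t) x''(t) ] e^{iψ(p,t)} dt`. -/
def Krad (x : ℝ → E3) (p : E3) : C3 :=
  (1 / Complex.I) •
    ∫ t : ℝ, Complex.exp (Complex.I * (psi x p t : ℂ)) •
      cmap ((psitt x p t / (psit x p t)^2) • deriv x t
            - (psit x p t)⁻¹ • deriv (deriv x) t)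

lemma norm_cmap (v : E3) : ‖cmap v‖ = ‖v‖ := by
  rw [EuclideanSpace.norm_eq, EuclideanSpace.norm_eq]
  congr 1
  refine Finset.sum_congr rfl fun i _ => ?_
  simp [cmap]

def cmapLin : E3 →ₗ[ℝ] C3 where
  toFun := cmap
  map_add' u v := by
    ext i
    simp [cmap]
  map_smul' r v := by
    ext i
    simp [cmap, Complex.real_smul]

def cmapL : E3 →L[ℝ] C3 := cmapLin.mkContinuous 1 (fun v => by
  show ‖cmap v‖ ≤ 1 * ‖v‖
  rw [norm_cmap, one_mul])

lemma cmapL_apply (v : E3) : cmapL v = cmap v := rfl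

lemma coe_smul_C3 (r : ℝ) (V : C3) : (r : ℂ) • V = r • V := by
  ext i
  simp [Complex.real_smul]

lemma norm_exp_I_mul_sub_one_le (θ : ℝ) :
    ‖Complex.exp (Complex.I * θ) - 1‖ ≤ |θ| := by
  have h1 : Complex.exp (Complex.I * θ) = Complex.cos θ + Complex.sin θ * Complex.I := by
    rw [mul_comm, Complex.exp_mul_I]
  have hsq : ‖Complex.exp (Complex.I * θ) - 1‖ ^ 2 = (Real.cos θ - 1)^2 + (Real.sin θ)^2 := by
    rw [h1]
    rw [Complex.sq_norm]
    simp [Complex.normSq_apply, Complex.cos_ofReal_re, Complex.sin_ofReal_re]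
    ring
  have hcos := Real.one_sub_sq_div_two_le_cos (x := θ)
  have hpyth := Real.sin_sq_add_cos_sq θ
  have h2 : ‖Complex.exp (Complex.I * θ) - 1‖ ^ 2 ≤ θ^2 := by
    rw [hsq]; nlinarith
  have h3 : (0:ℝ) ≤ ‖Complex.exp (Complex.I * θ) - 1‖ := norm_nonneg _
  nlinarith [abs_nonneg θ, _root_.sq_abs θ]

/-- if `x''` is supported in `[−T,T]`, so that `x' = v_in` for `t ≤ −T` and
`x' = v_out` for `t ≥ T`, then `K(p) − i F(p)` is bounded on `0 < |p| ≤ 1`, where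
`F(p) = v_out/(|p| − p·v_out) − v_in/(|p| − p·v_in)`. -/
theorem Krad_low_momentum_approx
    (x : ℝ → E3) (hx : ContDiff ℝ 3 x)
    (v₀ : ℝ) (hv₀ : v₀ < 1) (hbd : ∀ t, ‖deriv x t‖ ≤ v₀)
    (T : ℝ) (hsupp : Function.support (deriv (deriv x)) ⊆ Set.Icc (-T) T)
    (vin vout : E3)
    (hin : ∀ t : ℝ, t ≤ -T → deriv x t = vin)
    (hout : ∀ t : ℝ, T ≤ t → deriv x t = vout)
    (F : E3 → E3)
    (hF : ∀ p : E3, F p = (‖p‖ - (inner ℝ p vout : ℝ))⁻¹ • vout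
                        - (‖p‖ - (inner ℝ p vin : ℝ))⁻¹ • vin) :
    ∃ C : ℝ, ∀ p : E3, p ≠ 0 → ‖p‖ ≤ 1 → ‖Krad x p - Complex.I • cmap (F p)‖ ≤ C := by
  have hv00 : (0:ℝ) ≤ v₀ := le_trans (norm_nonneg _) (hbd 0)
  have h1v : (0:ℝ) < 1 - v₀ := by linarith
  set S : ℝ := max T 0 + 1 with hSdef
  have hTS : T ≤ S := le_trans (le_max_left T 0) (by linarith)
  have hTltS : T < S := lt_of_le_of_lt (le_max_left T 0) (by linarith)
  have hS0 : 0 < S := lt_of_le_of_lt (le_max_right T 0) (by linarith)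
  -- regularity
  have hx3 : ContDiff ℝ (2+1) x := by exact_mod_cast hx
  have hx1 : Differentiable ℝ x := (contDiff_succ_iff_deriv.mp hx3).1
  have hx2 : ContDiff ℝ (1+1) (deriv x) := (contDiff_succ_iff_deriv.mp hx3).2.2
  have hdx : Differentiable ℝ (deriv x) := (contDiff_succ_iff_deriv.mp hx2).1
  have hcx'' : Continuous (deriv (deriv x)) :=
    ((contDiff_succ_iff_deriv.mp hx2).2.2).continuous
  have hcx' : Continuous (deriv x) := hx2.continuous
  have hcx : Continuous x := hx1.continuous
  have hzero : ∀ t : ℝ, t ∉ Set.Icc (-T) T → deriv (deriv x) t = 0 := by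
    intro t ht
    by_contra h
    exact ht (hsupp h)
  have houtS : deriv x S = vout := hout S hTS
  have hinS : deriv x (-S) = vin := hin (-S) (by linarith)
  refine ⟨v₀ * (2*S) + (S + ‖x S‖) * (v₀/(1-v₀)) + (S + ‖x (-S)‖) * (v₀/(1-v₀)), ?_⟩
  intro p hp hp1
  have hppos : (0:ℝ) < ‖p‖ := norm_pos_iff.mpr hp
  -- lower bound on psit
  have hane : ∀ t, ‖p‖ * (1 - v₀) ≤ psit x p t := by
    intro t
    have h1 : (inner ℝ p (deriv x t) : ℝ) ≤ ‖p‖ * ‖deriv x t‖ := real_inner_le_norm p _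
    have h2 : ‖p‖ * ‖deriv x t‖ ≤ ‖p‖ * v₀ := by
      exact mul_le_mul_of_nonneg_left (hbd t) (norm_nonneg p)
    simp only [psit]
    nlinarith
  have hapos : ∀ t, 0 < psit x p t := fun t =>
    lt_of_lt_of_le (by positivity) (hane t)
  -- derivative facts
  have hpsi : ∀ t, HasDerivAt (psi x p) (psit x p t) t := by
    intro t
    have h1 : HasDerivAt (fun s => (inner ℝ p (x s) : ℝ)) (inner ℝ p (deriv x t) : ℝ) t := by
      simpa using HasDerivAt.inner ℝ (hasDerivAt_const t p) (hx1 t).hasDerivAt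
    have h := ((hasDerivAt_id t).const_mul ‖p‖).sub h1
    simp only [mul_one] at h
    exact h
  have hpsit : ∀ t, HasDerivAt (psit x p) (psitt x p t) t := by
    intro t
    have h1 : HasDerivAt (fun s => (inner ℝ p (deriv x s) : ℝ)) (inner ℝ p (deriv (deriv x) t) : ℝ) t := by
      simpa using HasDerivAt.inner ℝ (hasDerivAt_const t p) (hdx t).hasDerivAt
    have h := (hasDerivAt_const t ‖p‖).sub h1
    simp only [zero_sub] at h
    exact h
  set a : ℝ → ℝ := psit x p with ha
  set e : ℝ → ℂ := fun t => Complex.exp (Complex.I * (psi x p t : ℂ)) with he_def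
  have he : ∀ t, HasDerivAt e (e t * (Complex.I * (a t : ℂ))) t := by
    intro t
    have h1 : HasDerivAt (fun s => ((psi x p s : ℝ) : ℂ)) ((a t : ℝ) : ℂ) t :=
      (hpsi t).ofReal_comp
    have h2 := (h1.const_mul Complex.I).cexp
    simpa [he_def, mul_comm] using h2
  set w : ℝ → C3 := fun t => cmapL ((a t)⁻¹ • deriv x t) with hw_def
  have hw : ∀ t, HasDerivAt w
      (cmapL ((a t)⁻¹ • deriv (deriv x) t + (-(psitt x p t) / (a t)^2) • deriv x t)) t := by
    intro t
    have h1 : HasDerivAt (fun s => (a s)⁻¹) (-(psitt x p t) / (a t)^2) t :=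
      (hpsit t).inv (hapos t).ne'
    have h2 := h1.smul (hdx t).hasDerivAt
    exact cmapL.hasFDerivAt.comp_hasDerivAt t h2
  set g : ℝ → C3 := fun t => e t • w t with hg_def
  set G' : ℝ → C3 := fun t =>
    e t • cmapL ((a t)⁻¹ • deriv (deriv x) t + (-(psitt x p t) / (a t)^2) • deriv x t)
      + (e t * (Complex.I * (a t : ℂ))) • w t
    with hG'_def
  have hg : ∀ t, HasDerivAt g (G' t) t := fun t => (he t).smul (hw t)
  set Igd : ℝ → C3 := fun t =>
    Complex.exp (Complex.I * (psi x p t : ℂ)) •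
      cmap ((psitt x p t / (psit x p t)^2) • deriv x t
            - (psit x p t)⁻¹ • deriv (deriv x) t) with hIgd_def
  -- key pointwise identity
  have key : ∀ t, Igd t = (Complex.I * e t) • cmapL (deriv x t) - G' t := by
    intro t
    have h1 : cmapL ((a t)⁻¹ • deriv (deriv x) t + (-(psitt x p t) / (a t)^2) • deriv x t)
        = - cmapL ((psitt x p t / (a t)^2) • deriv x t - (a t)⁻¹ • deriv (deriv x) t) := by
      rw [← map_neg]
      congr 1
      rw [neg_sub, neg_div, neg_smul]
      abel
    have h2 : w t = (((a t)⁻¹ : ℝ) : ℂ) • cmapL (deriv x t) := by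
      show cmapL ((a t)⁻¹ • deriv x t) = _
      rw [_root_.map_smul, coe_smul_C3]
    have h3 : (e t * (Complex.I * (a t : ℂ))) • w t
        = (Complex.I * e t) • cmapL (deriv x t) := by
      rw [h2, smul_smul]
      congr 1
      have hne : ((a t : ℝ) : ℂ) ≠ 0 := by exact_mod_cast (hapos t).ne'
      push_cast
      field_simp
    show e t • cmap ((psitt x p t / (a t)^2) • deriv x t - (a t)⁻¹ • deriv (deriv x) t)
        = (Complex.I * e t) • cmapL (deriv x t) - G' t
    rw [show G' t = e t • cmapL ((a t)⁻¹ • deriv (deriv x) t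
          + (-(psitt x p t) / (a t)^2) • deriv x t)
        + (e t * (Complex.I * (a t : ℂ))) • w t from rfl]
    rw [h1, h3, smul_neg, ← cmapL_apply]
    abel
  -- support
  have hsupset : Function.support Igd ⊆ Set.Ioc (-S) S := by
    intro t ht
    by_contra hmem
    apply ht
    have hx'' : deriv (deriv x) t = 0 := by
      apply hzero
      intro hicc
      apply hmem
      exact ⟨lt_of_lt_of_le (by linarith) hicc.1, le_trans hicc.2 hTS⟩
    have hps0 : psitt x p t = 0 := by simp [psitt, hx'']
    have hc0 : cmap (0 : E3) = 0 := by rw [← cmapL_apply, map_zero]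
    simp only [hIgd_def, hps0, hx'', zero_div, zero_smul, smul_zero, sub_zero, hc0]
  -- rewrite Krad as an interval integral
  have hKrad : Krad x p = (1 / Complex.I) • ∫ t in (-S)..S, Igd t := by
    rw [Krad]
    congr 1
    exact (intervalIntegral.integral_eq_integral_of_support_subset hsupset).symm
  -- continuity facts
  have hconta : Continuous a := by
    show Continuous fun t => ‖p‖ - (inner ℝ p (deriv x t) : ℝ)
    exact continuous_const.sub (continuous_const.inner hcx')
  have hcontpsi : Continuous (psi x p) := by
    show Continuous fun t => ‖p‖ * t - (inner ℝ p (x t) : ℝ)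
    exact (continuous_const.mul continuous_id).sub (continuous_const.inner hcx)
  have hconte : Continuous e := by
    apply Complex.continuous_exp.comp
    exact continuous_const.mul (Complex.continuous_ofReal.comp hcontpsi)
  have hcontpsitt : Continuous (psitt x p) := by
    show Continuous fun t => -(inner ℝ p (deriv (deriv x) t) : ℝ)
    exact (continuous_const.inner hcx'').neg
  have hainv : Continuous fun t => (a t)⁻¹ :=
    hconta.inv₀ fun t => (hapos t).ne'
  have hcontw : Continuous w :=
    cmapL.continuous.comp (hainv.smul hcx')
  have hcontG' : Continuous G' := by
    apply Continuous.add
    · refine hconte.smul (cmapL.continuous.comp (Continuous.add ?_ ?_))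
      · exact hainv.smul hcx''
      · refine Continuous.fun_smul ?_ hcx'
        exact hcontpsitt.neg.div (hconta.pow 2) fun t => pow_ne_zero 2 (hapos t).ne'
    · exact (hconte.mul (continuous_const.mul (Complex.continuous_ofReal.comp hconta))).smul hcontw
  have hInt1 : IntervalIntegrable (fun t => (Complex.I * e t) • cmapL (deriv x t))
      volume (-S) S :=
    ((continuous_const.mul hconte).smul (cmapL.continuous.comp hcx')).intervalIntegrable _ _
  have hInt2 : IntervalIntegrable G' volume (-S) S := hcontG'.intervalIntegrable _ _
  have hFTC : ∫ t in (-S)..S, G' t = g S - g (-S) :=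
    intervalIntegral.integral_eq_sub_of_hasDerivAt (fun t _ => hg t) hInt2
  have hsplit : ∫ t in (-S)..S, Igd t
      = (∫ t in (-S)..S, (Complex.I * e t) • cmapL (deriv x t)) - (g S - g (-S)) := by
    rw [← hFTC, ← intervalIntegral.integral_sub hInt1 hInt2]
    apply intervalIntegral.integral_congr
    intro t _
    exact key t
  set B : C3 := ∫ t in (-S)..S, e t • cmapL (deriv x t) with hB_def
  have hpull : (∫ t in (-S)..S, (Complex.I * e t) • cmapL (deriv x t)) = Complex.I • B := by
    rw [hB_def, ← intervalIntegral.integral_smul]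
    apply intervalIntegral.integral_congr
    intro t _
    show (Complex.I * e t) • cmapL (deriv x t) = Complex.I • e t • cmapL (deriv x t)
    rw [mul_smul]
  have hKrad2 : Krad x p = B + Complex.I • (g S - g (-S)) := by
    rw [hKrad, hsplit, hpull, smul_sub, smul_smul,
      show (1 / Complex.I) * Complex.I = 1 by
        rw [one_div, inv_mul_cancel₀ Complex.I_ne_zero],
      one_smul, one_div, Complex.inv_I, neg_smul, sub_neg_eq_add]
  have haS : a S = ‖p‖ - (inner ℝ p vout : ℝ) := by
    show psit x p S = _
    rw [psit, houtS]
  have hamS : a (-S) = ‖p‖ - (inner ℝ p vin : ℝ) := by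
    show psit x p (-S) = _
    rw [psit, hinS]
  have hgS : g S = e S • cmapL ((‖p‖ - (inner ℝ p vout : ℝ))⁻¹ • vout) := by
    show e S • cmapL ((a S)⁻¹ • deriv x S) = _
    rw [haS, houtS]
  have hgmS : g (-S) = e (-S) • cmapL ((‖p‖ - (inner ℝ p vin : ℝ))⁻¹ • vin) := by
    show e (-S) • cmapL ((a (-S))⁻¹ • deriv x (-S)) = _
    rw [hamS, hinS]
  have hfinal : Krad x p - Complex.I • cmap (F p)
      = B + Complex.I • ((e S - 1) • cmapL ((‖p‖ - (inner ℝ p vout : ℝ))⁻¹ • vout)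
          - (e (-S) - 1) • cmapL ((‖p‖ - (inner ℝ p vin : ℝ))⁻¹ • vin)) := by
    rw [hKrad2, hgS, hgmS, hF p, ← cmapL_apply, map_sub]
    module
  -- norm bound on B
  have hnB : ‖B‖ ≤ v₀ * (2 * S) := by
    have hle : ∀ t ∈ Set.uIoc (-S) S, ‖e t • cmapL (deriv x t)‖ ≤ v₀ := by
      intro t _
      rw [norm_smul]
      have he1 : ‖e t‖ = 1 := by
        simp [he_def, Complex.norm_exp]
      rw [he1, one_mul, cmapL_apply, norm_cmap]
      exact hbd t
    have := intervalIntegral.norm_integral_le_of_norm_le_const hle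
    calc ‖B‖ ≤ v₀ * |S - (-S)| := this
      _ = v₀ * (2 * S) := by rw [_root_.abs_of_nonneg (by linarith : (0:ℝ) ≤ S - -S)]; ring
  -- boundary terms
  have hbt : ∀ (s : ℝ) (v : E3), deriv x s = v →
      ‖(e s - 1) • cmapL ((‖p‖ - (inner ℝ p v : ℝ))⁻¹ • v)‖
        ≤ (|s| + ‖x s‖) * (v₀ / (1 - v₀)) := by
    intro s v hv
    have hb : ‖p‖ * (1 - v₀) ≤ ‖p‖ - (inner ℝ p v : ℝ) := by
      have h := hane s
      rw [show a s = ‖p‖ - (inner ℝ p v : ℝ) by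
        show psit x p s = _; rw [psit, hv]] at h
      exact h
    have hbpos : (0:ℝ) < ‖p‖ - (inner ℝ p v : ℝ) := lt_of_lt_of_le (by positivity) hb
    have hnv : ‖v‖ ≤ v₀ := hv ▸ hbd s
    have h1 : ‖e s - 1‖ ≤ |psi x p s| := norm_exp_I_mul_sub_one_le _
    have h2 : |psi x p s| ≤ ‖p‖ * (|s| + ‖x s‖) := by
      have hi := abs_real_inner_le_norm p (x s)
      have hi1 : (inner ℝ p (x s) : ℝ) ≤ ‖p‖ * ‖x s‖ := (abs_le.mp hi).2
      have hi2 : -(‖p‖ * ‖x s‖) ≤ (inner ℝ p (x s) : ℝ) := (abs_le.mp hi).1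
      have hs1 : ‖p‖ * s ≤ ‖p‖ * |s| :=
        mul_le_mul_of_nonneg_left (le_abs_self s) (norm_nonneg p)
      have hs2 : -(‖p‖ * |s|) ≤ ‖p‖ * s := by
        have := mul_le_mul_of_nonneg_left (neg_abs_le s) (norm_nonneg p)
        linarith [this]
      have hexp : ‖p‖ * (|s| + ‖x s‖) = ‖p‖ * |s| + ‖p‖ * ‖x s‖ := by ring
      rw [abs_le]
      simp only [psi]
      constructor <;> linarith
    have h3 : ‖cmapL ((‖p‖ - (inner ℝ p v : ℝ))⁻¹ • v)‖ ≤ (‖p‖ * (1 - v₀))⁻¹ * v₀ := by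
      rw [cmapL_apply, norm_cmap, norm_smul, Real.norm_eq_abs,
        abs_of_pos (inv_pos.mpr hbpos)]
      have hi : (‖p‖ - (inner ℝ p v : ℝ))⁻¹ ≤ (‖p‖ * (1 - v₀))⁻¹ :=
        inv_anti₀ (by positivity) hb
      exact mul_le_mul hi hnv (norm_nonneg v) (by positivity)
    calc ‖(e s - 1) • cmapL ((‖p‖ - (inner ℝ p v : ℝ))⁻¹ • v)‖
        = ‖e s - 1‖ * ‖cmapL ((‖p‖ - (inner ℝ p v : ℝ))⁻¹ • v)‖ := norm_smul _ _
      _ ≤ (‖p‖ * (|s| + ‖x s‖)) * ((‖p‖ * (1 - v₀))⁻¹ * v₀) := by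
          apply mul_le_mul (h1.trans h2) h3 (norm_nonneg _)
          positivity
      _ = (|s| + ‖x s‖) * (v₀ / (1 - v₀)) := by
          field_simp
  have hb1 := hbt S vout houtS
  have hb2 := hbt (-S) vin hinS
  rw [abs_of_pos hS0] at hb1
  rw [abs_neg, abs_of_pos hS0] at hb2
  rw [hfinal]
  have htri : ‖B + Complex.I • ((e S - 1) • cmapL ((‖p‖ - (inner ℝ p vout : ℝ))⁻¹ • vout)
          - (e (-S) - 1) • cmapL ((‖p‖ - (inner ℝ p vin : ℝ))⁻¹ • vin))‖
      ≤ ‖B‖ + (‖(e S - 1) • cmapL ((‖p‖ - (inner ℝ p vout : ℝ))⁻¹ • vout)‖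
          + ‖(e (-S) - 1) • cmapL ((‖p‖ - (inner ℝ p vin : ℝ))⁻¹ • vin)‖) := by
    refine (norm_add_le _ _).trans ?_
    gcongr
    rw [norm_smul, Complex.norm_I, one_mul]
    exact norm_sub_le _ _
  refine htri.trans ?_
  have := add_le_add hnB (add_le_add hb1 hb2)
  linarith [this]
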